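/- arXiv:2003.05898 — 6 statements merged into one kernel-verified Lean document; each statement's English description precedes it below -/
import Mathlib

section
/- Let k ≥ 2 and let I, I' be instances over the same schema. If the Duplicator has a winning strategy in the existential k-pebble game on (I, I') witnessed by a family H of partial homomorphisms (closed under restriction and with the extension property up to domain size k), then for every instance I'' of treewidth at most k−1, a homomorphism from I'' to I implies a homomorphism from I'' to I'. -/
/-!
Root the tree decomposition and move outwards from the root. A strategy map whose domain is the
image of a bag can, by restriction and the extension property (bags have at most `k` elements),
be traded for one whose domain is the image of a neighbouring bag and which agrees with it on
their overlap. The maps so obtained agree along every edge, so by connectivity of the bags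
containing an element `d` they all send `h d` to the same value. This glues to a homomorphism
`I'' → I'`: every fact lies in some bag, whose map is a partial homomorphism.
-/

namespace MonDet

/-- A fact over schema `σ` with arities `ar`, with elements from domain `D`. -/
abbrev RFact (σ : Type) (ar : σ → ℕ) (D : Type) := Σ R : σ, Fin (ar R) → D

/-- Domain of a partial map, represented as a function into `Option`. -/
def pdom {D D' : Type} (f : D → Option D') : Set D := {a | f a ≠ none}

def PartialHom {σ D D' : Type} (ar : σ → ℕ)
    (I : Set (RFact σ ar D)) (I' : Set (RFact σ ar D'))
    (f : D → Option D') : Prop :=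
  ∀ (R : σ) (t : Fin (ar R) → D), (⟨R, t⟩ : RFact σ ar D) ∈ I →
    (∀ i, t i ∈ pdom f) →
    ∃ t' : Fin (ar R) → D', (∀ i, f (t i) = some (t' i)) ∧
      (⟨R, t'⟩ : RFact σ ar D') ∈ I'

def IsTreeDecomp {σ D ι : Type} (ar : σ → ℕ) (T : SimpleGraph ι)
    (bags : ι → Set D) (I : Set (RFact σ ar D)) : Prop :=
  T.IsTree ∧
  (∀ f ∈ I, ∃ v : ι, ∀ i, f.2 i ∈ bags v) ∧
  (∀ d : D, (T.induce {v : ι | d ∈ bags v}).Preconnected)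

end MonDet

namespace SimpleGraph

variable {V : Type*} {G : SimpleGraph V}

theorem Reachable.apply_eq_of_forall_adj {β : Type*} (φ : V → β)
    (hφ : ∀ u v, G.Adj u v → φ u = φ v) {u v : V} (h : G.Reachable u v) : φ u = φ v := by
  obtain ⟨p⟩ := h
  induction p with
  | nil => rfl
  | cons huw _ ih => exact (hφ _ _ huw).trans ih

theorem IsAcyclic.eq_concat_or_eq_concat (hG : G.IsAcyclic) {r u v : V}
    {p : G.Walk r u} {q : G.Walk r v} (hp : p.IsPath) (hq : q.IsPath) (huv : G.Adj u v) :
    q = p.concat huv ∨ p = q.concat huv.symm := by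
  by_cases hu : u ∈ q.support
  · exact .inl (hG.path_concat hp hq huv hu)
  · exact .inr (hG.path_concat hq hp huv.symm
      (hG.mem_support_of_ne_mem_support_of_adj_of_isPath hp hq huv hu))

theorem IsTree.exists_forall_adj {α : Type*} {P : V → α → Prop} {C : α → α → Prop}
    (hG : G.IsTree) (hC : ∀ a b, C a b → C b a) (hbase : ∃ r a, P r a)
    (hstep : ∀ u v a, G.Adj u v → P u a → ∃ b, P v b ∧ C a b) :
    ∃ F : V → α, (∀ v, P v (F v)) ∧ ∀ u v, G.Adj u v → C (F u) (F v) := by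
  obtain ⟨r, a₀, ha₀⟩ := hbase
  have : Nonempty α := ⟨a₀⟩
  let next : V → α → α := fun v a => Classical.epsilon fun b => P v b ∧ C a b
  have hnext : ∀ u v a, G.Adj u v → P u a → P v (next v a) ∧ C a (next v a) :=
    fun u v a huv ha => Classical.epsilon_spec (hstep u v a huv ha)
  let run : ∀ {u v}, G.Walk u v → α → α :=
    fun p a => p.darts.foldl (fun a d => next d.snd a) a
  have hrun : ∀ {u v} (p : G.Walk u v) a, P u a → P v (run p a) := by
    intro u v p
    induction p with
    | nil => exact fun _ ha => ha
    | cons huw _ ih => exact fun a ha => ih _ (hnext _ _ a huw ha).1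
  have hrun_concat : ∀ {u v} (p : G.Walk r u) (huv : G.Adj u v) a,
      run (p.concat huv) a = next v (run p a) := by
    intro u v p huv a
    simp [run, Walk.darts_concat]
  -- `F v` is obtained by running `next` along the path from `r` to `v`; the paths to two
  -- adjacent vertices differ by one final edge.
  choose path hpath using fun v => (hG.existsUnique_path r v).exists
  have hconcat : ∀ u v (huv : G.Adj u v), path v = (path u).concat huv →
      C (run (path u) a₀) (run (path v) a₀) := by
    intro u v huv h
    rw [h, hrun_concat]
    exact (hnext u v _ huv (hrun _ _ ha₀)).2
  refine ⟨fun v => run (path v) a₀, fun v => hrun _ _ ha₀, fun u v huv => ?_⟩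
  rcases hG.isAcyclic.eq_concat_or_eq_concat (hpath u) (hpath v) huv with h | h
  · exact hconcat u v huv h
  · exact hC _ _ (hconcat v u huv.symm h)

end SimpleGraph

namespace MonDet

section PartialMaps

variable {D D' : Type}

open Classical in
noncomputable def prestrict (f : D → Option D') (S : Set D) : D → Option D' :=
  fun a => if a ∈ S then f a else none

theorem prestrict_of_mem {f : D → Option D'} {S : Set D} {a : D} (ha : a ∈ S) :
    prestrict f S a = f a :=
  if_pos ha

theorem pdom_prestrict (f : D → Option D') (S : Set D) : pdom (prestrict f S) = S ∩ pdom f := by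
  ext a
  by_cases ha : a ∈ S <;> simp [prestrict, pdom, ha]

def Compatible (f g : D → Option D') : Prop :=
  ∀ a ∈ pdom f, a ∈ pdom g → f a = g a

theorem Compatible.symm {f g : D → Option D'} (h : Compatible f g) : Compatible g f :=
  fun a hg hf => (h a hf hg).symm

def RestrictionClosed (H : Set (D → Option D')) : Prop :=
  ∀ f ∈ H, ∀ g : D → Option D', (∀ a, g a = none ∨ g a = f a) → g ∈ H

def ExtensionProperty (k : ℕ) (H : Set (D → Option D')) : Prop :=
  ∀ f ∈ H, (pdom f).ncard < k → ∀ a : D,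
    ∃ g ∈ H, (∀ b ∈ pdom f, g b = f b) ∧ a ∈ pdom g

variable {k : ℕ} {H : Set (D → Option D')}

theorem RestrictionClosed.prestrict_mem (hres : RestrictionClosed H) {f : D → Option D'}
    (hf : f ∈ H) (S : Set D) : prestrict f S ∈ H :=
  hres f hf _ fun a => by by_cases ha : a ∈ S <;> simp [prestrict, ha]

theorem ExtensionProperty.exists_extension (hext : ExtensionProperty k H)
    (hres : RestrictionClosed H) {f : D → Option D'} (hf : f ∈ H) {S : Set D}
    (hS : S.Finite) (hSk : S.ncard ≤ k) (hfS : pdom f ⊆ S) :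
    ∃ g ∈ H, pdom g = S ∧ ∀ a ∈ pdom f, g a = f a := by
  suffices ∃ g ∈ H, pdom g = pdom f ∪ S ∧ ∀ a ∈ pdom f, g a = f a by
    rwa [Set.union_eq_self_of_subset_left hfS] at this
  refine Set.Finite.induction_on_subset
    (motive := fun E _ => ∃ g ∈ H, pdom g = pdom f ∪ E ∧ ∀ a ∈ pdom f, g a = f a) S hS
    ⟨f, hf, (Set.union_empty _).symm, fun _ _ => rfl⟩ ?_
  intro a E haS hES _ ⟨g, hg, hgdom, hgf⟩
  rw [Set.union_insert, ← hgdom]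
  by_cases ha : a ∈ pdom g
  · exact ⟨g, hg, (Set.insert_eq_of_mem ha).symm, hgf⟩
  have hgS : pdom g ⊆ S := hgdom ▸ Set.union_subset hfS hES
  have hgk : (pdom g).ncard < k :=
    (Set.ncard_lt_ncard (hgS.ssubset_of_not_subset fun h => ha (h haS))
      hS).trans_le hSk
  obtain ⟨g₁, hg₁, hg₁g, ha₁⟩ := hext g hg hgk a
  refine ⟨prestrict g₁ (insert a (pdom g)), hres.prestrict_mem hg₁ _, ?_, fun b hb => ?_⟩
  · rw [pdom_prestrict, Set.inter_eq_left]
    exact Set.insert_subset ha₁ fun b hb => by simpa [pdom, hg₁g b hb] using hb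
  · have hbg : b ∈ pdom g := hgdom ▸ Or.inl hb
    rw [prestrict_of_mem (Set.mem_insert_of_mem a hbg), hg₁g b hbg, hgf b hb]

theorem ExtensionProperty.exists_compatible (hext : ExtensionProperty k H)
    (hres : RestrictionClosed H) {f : D → Option D'} (hf : f ∈ H) {S : Set D}
    (hS : S.Finite) (hSk : S.ncard ≤ k) : ∃ g ∈ H, pdom g = S ∧ Compatible f g := by
  obtain ⟨g, hg, hgS, hgf⟩ := hext.exists_extension hres (hres.prestrict_mem hf S) hS hSk
    (pdom_prestrict f S ▸ Set.inter_subset_left)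
  refine ⟨g, hg, hgS, fun a haf hag => ?_⟩
  have haS : a ∈ S := hgS ▸ hag
  rw [hgf a (pdom_prestrict f S ▸ ⟨haS, haf⟩), prestrict_of_mem haS]

end PartialMaps

theorem PartialHom.mem_of_forall_eq_some {σ D D' : Type} {ar : σ → ℕ}
    {I : Set (RFact σ ar D)} {I' : Set (RFact σ ar D')} {f : D → Option D'}
    (hf : PartialHom ar I I' f) {R : σ} {t : Fin (ar R) → D} {t' : Fin (ar R) → D'}
    (ht : ⟨R, t⟩ ∈ I) (htt' : ∀ i, f (t i) = some (t' i)) : ⟨R, t'⟩ ∈ I' := by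
  obtain ⟨t'', ht'', hI'⟩ := hf R t ht fun i => by simp [pdom, htt' i]
  obtain rfl : t'' = t' := funext fun i => Option.some_injective _ ((ht'' i).symm.trans (htt' i))
  exact hI'

theorem exists_forall_mem_bags_eq_some {D D' D'' ι : Type} [Nonempty D'] {T : SimpleGraph ι}
    {bags : ι → Set D''} (hconn : ∀ d, (T.induce {v | d ∈ bags v}).Preconnected)
    (h : D'' → D) {F : ι → D → Option D'} (hF : ∀ v, ∀ d ∈ bags v, h d ∈ pdom (F v))
    (hadj : ∀ u v, T.Adj u v → Compatible (F u) (F v)) (d : D'') :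
    ∃ b, ∀ v, d ∈ bags v → F v (h d) = some b := by
  by_cases hd : ∃ v, d ∈ bags v
  · obtain ⟨u, hu⟩ := hd
    obtain ⟨b, hb⟩ := Option.ne_none_iff_exists'.mp (hF u d hu)
    refine ⟨b, fun v hv => hb ▸ ?_⟩
    refine (hconn d ⟨v, hv⟩ ⟨u, hu⟩).apply_eq_of_forall_adj (fun w => F w.1 (h d)) ?_
    exact fun w w' hww' => hadj w w' hww' (h d) (hF _ d w.2) (hF _ d w'.2)
  · exact ⟨Classical.arbitrary D', fun v hv => (hd ⟨v, hv⟩).elim⟩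

theorem pebble_game_transfers_bounded_treewidth_homomorphisms_general
    {σ D D' D'' : Type} (ar : σ → ℕ) (k : ℕ) (hk : 2 ≤ k)
    (I : Set (RFact σ ar D)) (I' : Set (RFact σ ar D'))
    (H : Set (D → Option D')) (hne : H.Nonempty)
    (hph : ∀ f ∈ H, PartialHom ar I I' f)
    (hres : ∀ f ∈ H, ∀ g : D → Option D', (∀ a, g a = none ∨ g a = f a) → g ∈ H)
    (hext : ∀ f ∈ H, (pdom f).ncard < k → ∀ a : D,
      ∃ g ∈ H, (∀ b ∈ pdom f, g b = f b) ∧ a ∈ pdom g)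
    (I'' : Set (RFact σ ar D''))
    {ι : Type} (T : SimpleGraph ι) (bags : ι → Set D'')
    (htd : IsTreeDecomp ar T bags I'')
    (hbags : ∀ v, (bags v).Finite ∧ (bags v).ncard ≤ k)
    (hhom : ∃ h : D'' → D, ∀ f ∈ I'',
      (⟨f.1, h ∘ f.2⟩ : RFact σ ar D) ∈ I) :
    ∃ h : D'' → D', ∀ f ∈ I'', (⟨f.1, h ∘ f.2⟩ : RFact σ ar D') ∈ I' := by
  obtain ⟨hT, hcover, hconn⟩ := htd
  obtain ⟨h, hh⟩ := hhom
  obtain ⟨f₀, hf₀⟩ := hne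
  have hcompat : ∀ {f S}, f ∈ H → S.Finite → S.ncard ≤ k →
      ∃ g ∈ H, pdom g = S ∧ Compatible f g :=
    fun hf => ExtensionProperty.exists_compatible hext hres hf
  have hto_bag : ∀ v, ∀ f ∈ H, ∃ g ∈ H, pdom g = h '' bags v ∧ Compatible f g := fun v _ hf =>
    hcompat hf ((hbags v).1.image h) ((Set.ncard_image_le (hbags v).1).trans (hbags v).2)
  have hroot : ∃ r g, g ∈ H ∧ pdom g = h '' bags r := by
    obtain ⟨r⟩ := hT.connected.nonempty
    obtain ⟨g, hg, hgr, -⟩ := hto_bag r f₀ hf₀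
    exact ⟨r, g, hg, hgr⟩
  obtain ⟨F, hF, hFadj⟩ := hT.exists_forall_adj (fun _ _ => Compatible.symm) hroot
    fun _ v f _ hf => by
      obtain ⟨g, hg, hgv, hfg⟩ := hto_bag v f hf.1
      exact ⟨g, ⟨hg, hgv⟩, hfg⟩
  have hval : ∀ d, ∃ b, ∀ v, d ∈ bags v → F v (h d) = some b := fun d => by
    have : Nonempty D' := by
      obtain ⟨g, -, hg, -⟩ := hcompat hf₀ (Set.finite_singleton (h d))
        (by rw [Set.ncard_singleton]; omega)
      obtain ⟨b, -⟩ := Option.ne_none_iff_exists'.mp (show h d ∈ pdom g from hg ▸ rfl)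
      exact ⟨b⟩
    exact exists_forall_mem_bags_eq_some hconn h
      (fun v d hd => (hF v).2 ▸ Set.mem_image_of_mem h hd) hFadj d
  choose g hg using hval
  refine ⟨g, fun ⟨R, t⟩ hR => ?_⟩
  obtain ⟨v, hv⟩ := hcover _ hR
  exact (hph _ (hF v).1).mem_of_forall_eq_some (hh _ hR) fun i => hg (t i) v (hv i)

/-- Let `k ≥ 2` and `I, I'` be instances over the same schema. If the
Duplicator has a winning strategy in the existential `k`-pebble game on `(I, I')`,
witnessed by a family `H` of partial homomorphisms (with domains of size ≤ `k`,
closed under restriction, with the extension property below size `k`), then for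
every instance `I''` of treewidth at most `k − 1` (i.e. having a tree decomposition
with bags of size at most `k`), a homomorphism from `I''` to `I` implies a
homomorphism from `I''` to `I'`. -/
theorem pebble_game_transfers_bounded_treewidth_homomorphisms
    {σ D D' D'' : Type} (ar : σ → ℕ) (k : ℕ) (hk : 2 ≤ k)
    (I : Set (RFact σ ar D)) (I' : Set (RFact σ ar D'))
    (H : Set (D → Option D')) (hne : H.Nonempty)
    (hph : ∀ f ∈ H, PartialHom ar I I' f)
    (hdom : ∀ f ∈ H, (pdom f).Finite ∧ (pdom f).ncard ≤ k)
    (hres : ∀ f ∈ H, ∀ g : D → Option D', (∀ a, g a = none ∨ g a = f a) → g ∈ H)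
    (hext : ∀ f ∈ H, (pdom f).ncard < k → ∀ a : D,
      ∃ g ∈ H, (∀ b ∈ pdom f, g b = f b) ∧ a ∈ pdom g)
    (I'' : Set (RFact σ ar D''))
    {ι : Type} (T : SimpleGraph ι) (bags : ι → Set D'')
    (htd : IsTreeDecomp ar T bags I'')
    (hbags : ∀ v, (bags v).Finite ∧ (bags v).ncard ≤ k)
    (hhom : ∃ h : D'' → D, ∀ f ∈ I'',
      (⟨f.1, h ∘ f.2⟩ : RFact σ ar D) ∈ I) :
    ∃ h : D'' → D', ∀ f ∈ I'', (⟨f.1, h ∘ f.2⟩ : RFact σ ar D') ∈ I' :=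
  pebble_game_transfers_bounded_treewidth_homomorphisms_general ar k hk I I' H hne hph hres hext I''
    T bags htd hbags hhom

end MonDet
end

section
/- Let TD be a tree decomposition of an instance I with bags of size at most k such that every element of I lies in at most 2 bags. If V is a set of connected conjunctive query views each of radius at most r, then the view image V(I) has treewidth at most k(k^{r+1} − 1)/(k − 1): the tree obtained by replacing each bag b by its r-extension ext(b, r) is a tree decomposition of V(I) with bags of size at most k + k² + … + k^{r+1}. -/
namespace MonDet

/-- `h` is a homomorphism from instance `I` to instance `I'`. -/
def IsHom {σ : Type} (ar : σ → ℕ) {D D' : Type} (h : D → D')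
    (I : Set (RFact σ ar D)) (I' : Set (RFact σ ar D')) : Prop :=
  ∀ f ∈ I, (⟨f.1, h ∘ f.2⟩ : RFact σ ar D') ∈ I'

/-- The active domain of an instance. -/
def adom {σ D : Type} (ar : σ → ℕ) (I : Set (RFact σ ar D)) : Set D :=
  {a | ∃ f ∈ I, ∃ i, f.2 i = a}

/-- The Gaifman graph of an instance: elements are adjacent iff they are distinct
and co-occur in some fact. -/
def gaifman {σ D : Type} (ar : σ → ℕ) (I : Set (RFact σ ar D)) : SimpleGraph D :=
  SimpleGraph.fromRel (fun a b => ∃ f ∈ I, (∃ i, f.2 i = a) ∧ (∃ j, f.2 j = b))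

/-- A conjunctive query over schema `(σ, ar)`: free variables `Fin nfree`,
existential variables `Var`, and a set of atoms (its canonical database). -/
structure CQ (σ : Type) (ar : σ → ℕ) where
  nfree : ℕ
  Var : Type
  atoms : Set (RFact σ ar (Fin nfree ⊕ Var))

/-- The output of a CQ on an instance: tuples witnessed by a homomorphism of the
canonical database. -/
def CQ.eval {σ D : Type} {ar : σ → ℕ} (q : CQ σ ar)
    (I : Set (RFact σ ar D)) : Set (Fin q.nfree → D) :=
  {t | ∃ η : (Fin q.nfree ⊕ q.Var) → D,
    (∀ i, η (Sum.inl i) = t i) ∧ IsHom ar η q.atoms I}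

/-- A CQ is connected if the Gaifman graph of its canonical database is connected
on its active domain. -/
def CQ.Connected {σ : Type} {ar : σ → ℕ} (q : CQ σ ar) : Prop :=
  ∀ a b, a ∈ adom ar q.atoms → b ∈ adom ar q.atoms →
    (gaifman ar q.atoms).Reachable a b

/-- A CQ has radius at most `r`: some active-domain element is within Gaifman
distance `r` of every active-domain element. -/
def CQ.RadiusLE {σ : Type} {ar : σ → ℕ} (q : CQ σ ar) (r : ℕ) : Prop :=
  ∃ u ∈ adom ar q.atoms, ∀ w ∈ adom ar q.atoms,
    ∃ p : (gaifman ar q.atoms).Walk u w, p.length ≤ r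

/-- The view image of `I` under a collection of CQ views indexed by `ν`. -/
def viewImage {σ D ν : Type} (ar : σ → ℕ) (q : ν → CQ σ ar)
    (I : Set (RFact σ ar D)) : Set (RFact ν (fun v => (q v).nfree) D) :=
  {f | f.2 ∈ (q f.1).eval I}

/-- The `n`-extension of the bag at node `b`: `ext 0 = bag b`, and `ext (n+1)`
consists of all elements sharing a bag with some element of `ext n`. -/
def ext {D ι : Type} (bag : ι → Set D) (b : ι) : ℕ → Set D
  | 0 => bag b
  | n + 1 => {u | ∃ v ∈ ext bag b n, ∃ w : ι, u ∈ bag w ∧ v ∈ bag w}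

/-! A homomorphism of a view's canonical database into `I` sends each atom into a bag, so along
a Gaifman walk of length `ℓ` from a centre of the view the image moves from a bag `b` into
`ext b ℓ`; radius `r` and safety put every output tuple inside some `ext b r`. The nodes whose
`(n+1)`-extension contains `d` are the runs, at level `n`, of the elements sharing a bag with `d`,
each meeting the run of `d`, so connectivity is inherited. For the size, an element first reached
at step `n` already lies in a bag inside `ext b n`; since it lies in at most two bags, it adds at
most `k` new elements, so the `n`-th frontier has at most `k ^ (n + 1)` elements. -/

theorem _root_.Set.ncard_biUnion_le_mul {α ι : Type*} {t : Set ι} (ht : t.Finite)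
    {s : ι → Set α} {k : ℕ} (hs : ∀ i ∈ t, (s i).ncard ≤ k) :
    (⋃ i ∈ t, s i).ncard ≤ t.ncard * k := by
  have hsum := Finset.set_ncard_biUnion_le ht.toFinset s
  simp only [Set.Finite.mem_toFinset] at hsum
  calc (⋃ i ∈ t, s i).ncard ≤ ∑ i ∈ ht.toFinset, (s i).ncard := hsum
    _ ≤ ht.toFinset.card • k := Finset.sum_le_card_nsmul _ _ _ (by simpa using hs)
    _ = t.ncard * k := by rw [smul_eq_mul, Set.ncard_eq_toFinset_card t ht]

section Extension

variable {D ι : Type} {bag : ι → Set D} {b : ι} {n : ℕ}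

def bagNbhd (bag : ι → Set D) (v : D) : Set D :=
  ⋃ w ∈ {w | v ∈ bag w}, bag w

theorem ext_succ : ext bag b (n + 1) = ⋃ v ∈ ext bag b n, bagNbhd bag v := by
  ext u
  simp only [ext, bagNbhd, Set.mem_ofPred_eq, Set.mem_iUnion, exists_prop]
  grind

theorem bagNbhd_subset_ext_succ {v : D} (hv : v ∈ ext bag b n) :
    bagNbhd bag v ⊆ ext bag b (n + 1) :=
  ext_succ (n := n) ▸ Set.subset_biUnion_of_mem hv

theorem exists_bag_subset_ext {v : D} (hv : v ∈ ext bag b n) :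
    ∃ w, v ∈ bag w ∧ bag w ⊆ ext bag b n := by
  cases n with
  | zero => exact ⟨b, hv, subset_rfl⟩
  | succ m =>
    obtain ⟨u, hu, w, hvw, huw⟩ := hv
    exact ⟨w, hvw, fun x hx => ⟨u, hu, w, hx, huw⟩⟩

theorem ext_monotone : Monotone (ext bag b) := by
  refine monotone_nat_of_le_succ fun n v hv => ?_
  obtain ⟨w, hvw, -⟩ := exists_bag_subset_ext hv
  exact ⟨v, hv, w, hvw, hvw⟩

theorem ext_finite (hfin : ∀ w, (bag w).Finite) (hocc : ∀ v, {w | v ∈ bag w}.Finite) :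
    ∀ n, (ext bag b n).Finite
  | 0 => hfin b
  | n + 1 => ext_succ (n := n) ▸
      (ext_finite hfin hocc n).biUnion fun v _ => (hocc v).biUnion fun w _ => hfin w

def extFrontier (bag : ι → Set D) (b : ι) : ℕ → Set D
  | 0 => bag b
  | n + 1 => ext bag b (n + 1) \ ext bag b n

theorem extFrontier_subset_ext : extFrontier bag b n ⊆ ext bag b n := by
  cases n with
  | zero => exact subset_rfl
  | succ m => exact Set.sdiff_subset

theorem ext_succ_eq_union_extFrontier :
    ext bag b (n + 1) = ext bag b n ∪ extFrontier bag b (n + 1) :=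
  (Set.union_sdiff_cancel (ext_monotone n.le_succ)).symm

theorem extFrontier_succ :
    extFrontier bag b (n + 1) = ⋃ v ∈ extFrontier bag b n, bagNbhd bag v \ ext bag b n := by
  ext u
  simp only [Set.mem_iUnion, exists_prop]
  constructor
  · rintro ⟨hu, hun⟩
    rw [ext_succ, Set.mem_iUnion₂] at hu
    obtain ⟨v, hv, huv⟩ := hu
    refine ⟨v, ?_, huv, hun⟩
    cases n with
    | zero => exact hv
    | succ m => exact ⟨hv, fun hvm => hun (bagNbhd_subset_ext_succ hvm huv)⟩
  · rintro ⟨v, hv, huv, hun⟩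
    exact ⟨bagNbhd_subset_ext_succ (extFrontier_subset_ext hv) huv, hun⟩

/-- Each element of `ext bag b n` lies in a bag inside `ext bag b n`, so at most one other bag
contributes new elements. -/
theorem ncard_bagNbhd_diff_ext_le {k : ℕ} (hfin : ∀ w, (bag w).Finite)
    (hcard : ∀ w, (bag w).ncard ≤ k) {v : D}
    (hocc : {w | v ∈ bag w}.Finite ∧ {w | v ∈ bag w}.ncard ≤ 2) (hv : v ∈ ext bag b n) :
    (bagNbhd bag v \ ext bag b n).ncard ≤ k := by
  obtain ⟨w₀, hvw₀, hw₀⟩ := exists_bag_subset_ext hv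
  have hW : ({w | v ∈ bag w} \ {w₀}).ncard ≤ 1 := by
    rw [Set.ncard_sdiff_singleton_of_mem (s := {w | v ∈ bag w}) hvw₀]
    omega
  have hsub : bagNbhd bag v \ ext bag b n ⊆ ⋃ w ∈ {w | v ∈ bag w} \ {w₀}, bag w := by
    rintro u ⟨hu, hun⟩
    simp only [bagNbhd, Set.mem_iUnion₂] at hu
    obtain ⟨w, hvw, huw⟩ := hu
    have hw : w ≠ w₀ := by rintro rfl; exact hun (hw₀ huw)
    exact Set.mem_biUnion ⟨hvw, hw⟩ huw
  calc (bagNbhd bag v \ ext bag b n).ncard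
      ≤ (⋃ w ∈ {w | v ∈ bag w} \ {w₀}, bag w).ncard :=
        Set.ncard_le_ncard hsub (hocc.1.sdiff.biUnion fun w _ => hfin w)
    _ ≤ ({w | v ∈ bag w} \ {w₀}).ncard * k := Set.ncard_biUnion_le_mul hocc.1.sdiff fun w _ => hcard w
    _ ≤ k := by nlinarith

section Counting

variable {k : ℕ} (hfin : ∀ w, (bag w).Finite) (hcard : ∀ w, (bag w).ncard ≤ k)
  (htwo : ∀ v : D, {w | v ∈ bag w}.Finite ∧ {w | v ∈ bag w}.ncard ≤ 2)
include hfin hcard htwo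

theorem ncard_extFrontier_le : ∀ n, (extFrontier bag b n).ncard ≤ k ^ (n + 1)
  | 0 => by simpa [extFrontier] using hcard b
  | n + 1 => by
    have hfront : (extFrontier bag b n).Finite :=
      (ext_finite hfin (fun v => (htwo v).1) n).subset extFrontier_subset_ext
    calc (extFrontier bag b (n + 1)).ncard
        ≤ (extFrontier bag b n).ncard * k := by
          rw [extFrontier_succ]
          exact Set.ncard_biUnion_le_mul hfront fun v hv =>
            ncard_bagNbhd_diff_ext_le hfin hcard (htwo v) (extFrontier_subset_ext hv)
      _ ≤ k ^ (n + 1) * k := Nat.mul_le_mul_right k (ncard_extFrontier_le n)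
      _ = k ^ (n + 2) := (pow_succ k (n + 1)).symm

theorem ncard_ext_le : ∀ n, (ext bag b n).ncard ≤ ∑ i ∈ Finset.range (n + 1), k ^ (i + 1)
  | 0 => by simpa [ext] using hcard b
  | n + 1 => by
    rw [ext_succ_eq_union_extFrontier, Finset.sum_range_succ]
    calc (ext bag b n ∪ extFrontier bag b (n + 1)).ncard
        ≤ (ext bag b n).ncard + (extFrontier bag b (n + 1)).ncard := Set.ncard_union_le _ _
      _ ≤ _ := add_le_add (ncard_ext_le n)
          (ncard_extFrontier_le hfin hcard htwo (n + 1))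

end Counting

section Runs

variable {T : SimpleGraph ι}

theorem reachable_induce_of_subset {A B : Set ι} (hAB : A ⊆ B) {x y : ι} {hx : x ∈ A}
    {hy : y ∈ A} (h : (T.induce A).Reachable ⟨x, hx⟩ ⟨y, hy⟩) :
    (T.induce B).Reachable ⟨x, hAB hx⟩ ⟨y, hAB hy⟩ :=
  h.map (SimpleGraph.induceHomOfLE T hAB).toHom

theorem ext_preconnected (hrun : ∀ d : D, (T.induce {w | d ∈ bag w}).Preconnected) :
    ∀ (n : ℕ) (d : D), (T.induce {w | d ∈ ext bag w n}).Preconnected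
  | 0 => hrun
  | n + 1 => by
    intro d
    have hbag : {w | d ∈ bag w} ⊆ {w | d ∈ ext bag w (n + 1)} :=
      fun w hw => ext_monotone (Nat.zero_le _) hw
    have to_bag : ∀ x (hx : d ∈ ext bag x (n + 1)), ∃ w, ∃ hw : d ∈ bag w,
        (T.induce {w | d ∈ ext bag w (n + 1)}).Reachable ⟨x, hx⟩ ⟨w, hbag hw⟩ := by
      rintro x ⟨e, he, w, hdw, hew⟩
      have hrun_e : {w | e ∈ ext bag w n} ⊆ {w | d ∈ ext bag w (n + 1)} :=
        fun y hy => ⟨e, hy, w, hdw, hew⟩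
      have hw : w ∈ {w | e ∈ ext bag w n} := ext_monotone (Nat.zero_le _) hew
      exact ⟨w, hdw, reachable_induce_of_subset hrun_e
        (ext_preconnected hrun n e ⟨x, he⟩ ⟨w, hw⟩)⟩
    rintro ⟨x, hx⟩ ⟨y, hy⟩
    obtain ⟨wx, hdwx, hx⟩ := to_bag x hx
    obtain ⟨wy, hdwy, hy⟩ := to_bag y hy
    exact hx.trans ((reachable_induce_of_subset hbag (hrun d ⟨wx, hdwx⟩ ⟨wy, hdwy⟩)).trans hy.symm)

end Runs

section Cover

variable {σ : Type} {ar : σ → ℕ} {I : Set (RFact σ ar D)}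
  (hcover : ∀ f ∈ I, ∃ w, ∀ i, f.2 i ∈ bag w)
include hcover

theorem mem_ext_succ_of_mem_fact {f : RFact σ ar D} (hf : f ∈ I) {i j : Fin (ar f.1)}
    (hi : f.2 i ∈ ext bag b n) : f.2 j ∈ ext bag b (n + 1) := by
  obtain ⟨w, hw⟩ := hcover f hf
  exact ⟨f.2 i, hi, w, hw j, hw i⟩

theorem map_mem_ext_of_walk {E : Type} {J : Set (RFact σ ar E)} {η : E → D}
    (hη : IsHom ar η J I) {a c : E} (p : (gaifman ar J).Walk a c) {n : ℕ}
    (ha : η a ∈ ext bag b n) : η c ∈ ext bag b (n + p.length) := by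
  induction p generalizing n with
  | nil => exact ha
  | @cons a x c hax p ih =>
    obtain ⟨f, hf, ⟨i, rfl⟩, ⟨j, rfl⟩⟩ : ∃ f ∈ J, (∃ i, f.2 i = a) ∧ (∃ j, f.2 j = x) := by
      rcases hax.2 with ⟨f, hf, hfa, hfx⟩ | ⟨f, hf, hfx, hfa⟩
      exacts [⟨f, hf, hfa, hfx⟩, ⟨f, hf, hfa, hfx⟩]
    have hx := mem_ext_succ_of_mem_fact hcover (hη f hf) (j := j) ha
    rw [SimpleGraph.Walk.length_cons, ← add_assoc, add_right_comm]
    exact ih hx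

/-- The homomorphism witnessing `t` sends a centre of `q` into some bag, and every free
variable into its `r`-extension. -/
theorem exists_forall_mem_ext_of_mem_eval {q : CQ σ ar} {r : ℕ} (hrad : q.RadiusLE r)
    (hsafe : ∀ i, Sum.inl i ∈ adom ar q.atoms) {t : Fin q.nfree → D} (ht : t ∈ q.eval I) :
    ∃ b, ∀ i, t i ∈ ext bag b r := by
  obtain ⟨η, hηt, hη⟩ := ht
  obtain ⟨u, ⟨g, hg, i₀, rfl⟩, hwalk⟩ := hrad
  obtain ⟨b, hb⟩ := hcover _ (hη g hg)
  refine ⟨b, fun i => ?_⟩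
  obtain ⟨p, hp⟩ := hwalk _ (hsafe i)
  have hmem := map_mem_ext_of_walk (n := 0) hcover hη p (hb i₀)
  rw [← hηt, zero_add] at *
  exact ext_monotone hp hmem

end Cover

end Extension

theorem view_image_treewidth_bound_general
    {σ D ι ν : Type} (ar : σ → ℕ) (k r : ℕ)
    (I : Set (RFact σ ar D)) (T : SimpleGraph ι) (bag : ι → Set D)
    (htd : IsTreeDecomp ar T bag I)
    (hfin : ∀ v, (bag v).Finite) (hcard : ∀ v, (bag v).ncard ≤ k)
    (htwo : ∀ d : D, {v : ι | d ∈ bag v}.Finite ∧ {v : ι | d ∈ bag v}.ncard ≤ 2)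
    (q : ν → CQ σ ar)
    (hrad : ∀ v, (q v).RadiusLE r)
    (hsafe : ∀ (v : ν) (i : Fin (q v).nfree), Sum.inl i ∈ adom ar (q v).atoms) :
    IsTreeDecomp (fun v => (q v).nfree) T (fun b => ext bag b r)
      (viewImage ar q I) ∧
    ∀ b : ι, (ext bag b r).Finite ∧
      (ext bag b r).ncard ≤ ∑ i ∈ Finset.range (r + 1), k ^ (i + 1) := by
  obtain ⟨htree, hcover, hrun⟩ := htd
  refine ⟨⟨htree, fun f hf => ?_, ext_preconnected hrun r⟩, fun b =>
    ⟨ext_finite hfin (fun d => (htwo d).1) r, ncard_ext_le hfin hcard htwo r⟩⟩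
  exact exists_forall_mem_ext_of_mem_eval hcover (hrad f.1) (hsafe f.1) hf

/-- Let `TD` be a tree decomposition of `I` with bags of size at
most `k` in which every element lies in at most `2` bags. If `V` is a collection
of connected CQ views, each of radius at most `r` (and safe: every free variable
occurs in some atom), then replacing each bag by its `r`-extension yields a tree
decomposition of the view image `V(I)` with bags of size at most
`k + k² + … + k^{r+1}` (so `V(I)` has treewidth at most `k(k^{r+1}−1)/(k−1)`). -/
theorem view_image_treewidth_bound
    {σ D ι ν : Type} (ar : σ → ℕ) (k r : ℕ)
    (I : Set (RFact σ ar D)) (T : SimpleGraph ι) (bag : ι → Set D)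
    (htd : IsTreeDecomp ar T bag I)
    (hfin : ∀ v, (bag v).Finite) (hcard : ∀ v, (bag v).ncard ≤ k)
    (htwo : ∀ d : D, {v : ι | d ∈ bag v}.Finite ∧ {v : ι | d ∈ bag v}.ncard ≤ 2)
    (q : ν → CQ σ ar)
    (hconn : ∀ v, (q v).Connected)
    (hrad : ∀ v, (q v).RadiusLE r)
    (hsafe : ∀ (v : ν) (i : Fin (q v).nfree), Sum.inl i ∈ adom ar (q v).atoms) :
    IsTreeDecomp (fun v => (q v).nfree) T (fun b => ext bag b r)
      (viewImage ar q I) ∧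
    ∀ b : ι, (ext bag b r).Finite ∧
      (ext bag b r).ncard ≤ ∑ i ∈ Finset.range (r + 1), k ^ (i + 1) :=
  view_image_treewidth_bound_general ar k r I T bag htd hfin hcard htwo q hrad hsafe

end MonDet
end

section
/- Under the hypotheses of the extension tree decomposition construction (bags of size ≤ k, each element in at most 2 bags), if an element v occurs in the r-extensions of two bags b_1 and b_2, then v occurs in the r-extension of every bag on the unique path between b_1 and b_2 in the tree; hence for each element v, the set of nodes whose r-extension contains v is connected in the tree. -/
namespace MonDet

lemma bag_subset_ext {D ι : Type} (bag : ι → Set D) (b : ι) (n : ℕ) :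
    bag b ⊆ ext bag b n := by
  induction n with
  | zero => exact fun x hx => hx
  | succ n ih => exact fun x hx => ⟨x, ih hx, b, hx, hx⟩

lemma path_support_subset {ι : Type} {T : SimpleGraph ι} (hT : T.IsAcyclic)
    {a b : ι} (q : T.Walk a b) (hq : q.IsPath) (w : T.Walk a b) :
    q.support ⊆ w.support := by
  classical
  have : (⟨q, hq⟩ : T.Path a b) = w.toPath := hT.path_unique _ _
  have hs : q.support = (w.toPath : T.Walk a b).support := by rw [← this]
  rw [hs]
  exact w.support_toPath_subset

lemma mem_bag_of_mem_path {D ι : Type} {T : SimpleGraph ι} {bag : ι → Set D}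
    (hT : T.IsAcyclic)
    (hconn : ∀ d : D, (T.induce {v : ι | d ∈ bag v}).Preconnected)
    {d : D} {w₁ w₂ : ι} (h₁ : d ∈ bag w₁) (h₂ : d ∈ bag w₂)
    (q : T.Walk w₁ w₂) (hq : q.IsPath) {u : ι} (hu : u ∈ q.support) :
    d ∈ bag u := by
  obtain ⟨W⟩ := hconn d ⟨w₁, h₁⟩ ⟨w₂, h₂⟩
  have hW : u ∈ (W.map (SimpleGraph.Embedding.induce _).toHom).support :=
    path_support_subset hT q hq _ hu
  rw [SimpleGraph.Walk.support_map] at hW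
  obtain ⟨⟨x, hx⟩, _, rfl⟩ := List.mem_map.mp hW
  exact hx

lemma reachable_induce {ι : Type} {T : SimpleGraph ι} {s : Set ι}
    {a b : ι} (w : T.Walk a b) (h : ∀ v ∈ w.support, v ∈ s) :
    (T.induce s).Reachable ⟨a, h a w.start_mem_support⟩ ⟨b, h b w.end_mem_support⟩ := by
  induction w with
  | nil => rfl
  | cons hadj w' ih =>
    rename_i x y z
    have hx : x ∈ s := h x (SimpleGraph.Walk.start_mem_support _)
    have hy : y ∈ s := h y (by simp)
    have h' : ∀ v ∈ w'.support, v ∈ s := fun v hv => h v (by simp [hv])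
    exact SimpleGraph.Reachable.trans
      (SimpleGraph.Adj.reachable (by exact hadj : (T.induce s).Adj ⟨x, hx⟩ ⟨y, hy⟩))
      (ih h')

lemma ext_path_mem {D ι : Type} {T : SimpleGraph ι} {bag : ι → Set D}
    (hT : T.IsTree)
    (hconn : ∀ d : D, (T.induce {v : ι | d ∈ bag v}).Preconnected) (r : ℕ) :
    ∀ (d : D) (b₁ b₂ : ι), d ∈ ext bag b₁ r → d ∈ ext bag b₂ r →
      ∀ (p : T.Walk b₁ b₂), p.IsPath → ∀ u ∈ p.support, d ∈ ext bag u r := by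
  induction r with
  | zero =>
    intro d b₁ b₂ h₁ h₂ p hp u hu
    exact mem_bag_of_mem_path hT.IsAcyclic hconn h₁ h₂ p hp hu
  | succ r ih =>
    intro d b₁ b₂ h₁ h₂ p hp u hu
    obtain ⟨v₁, hv₁, w₁, hdw₁, hvw₁⟩ := h₁
    obtain ⟨v₂, hv₂, w₂, hdw₂, hvw₂⟩ := h₂
    have hc := hT.isConnected.preconnected
    obtain ⟨W₁⟩ := hc b₁ w₁
    obtain ⟨W₂⟩ := hc w₁ w₂
    obtain ⟨W₃⟩ := hc w₂ b₂
    classical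
    let q₁ := W₁.toPath
    let q₂ := W₂.toPath
    let q₃ := W₃.toPath
    have hu' : u ∈ ((q₁ : T.Walk b₁ w₁).append
        ((q₂ : T.Walk w₁ w₂).append (q₃ : T.Walk w₂ b₂))).support :=
      path_support_subset hT.IsAcyclic p hp _ hu
    rw [SimpleGraph.Walk.mem_support_append_iff,
        SimpleGraph.Walk.mem_support_append_iff] at hu'
    rcases hu' with hu1 | hu2 | hu3
    · have : v₁ ∈ ext bag u r :=
        ih v₁ b₁ w₁ hv₁ (bag_subset_ext bag w₁ r hvw₁) q₁ q₁.isPath u hu1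
      exact ⟨v₁, this, w₁, hdw₁, hvw₁⟩
    · have : d ∈ bag u :=
        mem_bag_of_mem_path hT.IsAcyclic hconn hdw₁ hdw₂ q₂ q₂.isPath hu2
      exact bag_subset_ext bag u (r + 1) this
    · have : v₂ ∈ ext bag u r :=
        ih v₂ w₂ b₂ (bag_subset_ext bag w₂ r hvw₂) hv₂ q₃ q₃.isPath u hu3
      exact ⟨v₂, this, w₂, hdw₂, hvw₂⟩

/-- Under the hypotheses of the extension construction (tree
decomposition with bags of size ≤ `k`, each element in at most `2` bags), if an
element `d` occurs in the `r`-extensions of two bags `b₁` and `b₂`, then `d`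
occurs in the `r`-extension of every bag on the (unique) path between `b₁` and
`b₂` in the tree; hence for each element `d`, the set of nodes whose `r`-extension
contains `d` is connected in the tree. -/
theorem ext_bags_connected
    {σ D ι : Type} (ar : σ → ℕ) (k r : ℕ)
    (I : Set (RFact σ ar D)) (T : SimpleGraph ι) (bag : ι → Set D)
    (htd : IsTreeDecomp ar T bag I)
    (hfin : ∀ v, (bag v).Finite) (hcard : ∀ v, (bag v).ncard ≤ k)
    (htwo : ∀ d : D, {v : ι | d ∈ bag v}.Finite ∧ {v : ι | d ∈ bag v}.ncard ≤ 2) :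
    (∀ (d : D) (b₁ b₂ : ι), d ∈ ext bag b₁ r → d ∈ ext bag b₂ r →
      ∀ (p : T.Walk b₁ b₂), p.IsPath → ∀ u ∈ p.support, d ∈ ext bag u r) ∧
    (∀ d : D, (T.induce {u : ι | d ∈ ext bag u r}).Preconnected) := by
  obtain ⟨hT, _, hconn⟩ := htd
  have main := ext_path_mem hT hconn r
  refine ⟨main, fun d => ?_⟩
  rintro ⟨u₁, h₁⟩ ⟨u₂, h₂⟩
  classical
  obtain ⟨W⟩ := hT.isConnected.preconnected u₁ u₂
  have hsup : ∀ v ∈ (W.toPath : T.Walk u₁ u₂).support, v ∈ {u : ι | d ∈ ext bag u r} :=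
    fun v hv => main d u₁ u₂ h₁ h₂ W.toPath W.toPath.isPath v hv
  exact reachable_induce _ hsup

end MonDet
end

section
/- Let Q = ⋁_i Q_i¹ and Q_V = ⋁_j Q_j² be Boolean queries given as (possibly infinite) unions of non-empty conjunctive queries, each preserved by homomorphisms, and let V be the single Boolean view defined by Q_V. Then Q is monotonically determined over {V} if and only if Q and Q_V are equivalent (hold on exactly the same instances). -/
namespace MonDet

/-- Let `Q = ⋁_a Q_a¹` and `Q_V = ⋁_b Q_b²` be Boolean queries given
as (possibly infinite) non-empty unions of non-empty conjunctive queries — here a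
Boolean CQ is modelled by its canonical database (a non-empty finite instance
`A a` resp. `B b`), and the query holds on `I` iff the canonical database maps
homomorphically into `I`. Let `V` be the single Boolean view defined by `Q_V`, so
the view image of `I` is the truth value `Q_V(I)`. Then `Q` is monotonically
determined over `{V}` iff `Q` and `Q_V` are equivalent. -/
theorem boolean_view_monotonic_determinacy_iff_equivalent
    {σ D : Type} (ar : σ → ℕ) {α β : Type} [Nonempty α] [Nonempty β]
    (A : α → Set (RFact σ ar D)) (B : β → Set (RFact σ ar D))
    (hA : ∀ a, (A a).Nonempty ∧ (A a).Finite)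
    (hB : ∀ b, (B b).Nonempty ∧ (B b).Finite)
    (Q QV : Set (RFact σ ar D) → Prop)
    (hQ : ∀ I, Q I ↔ ∃ a, ∃ h : D → D, IsHom ar h (A a) I)
    (hQV : ∀ I, QV I ↔ ∃ b, ∃ h : D → D, IsHom ar h (B b) I) :
    (∀ I₁ I₂ : Set (RFact σ ar D), (QV I₁ → QV I₂) → Q I₁ → Q I₂) ↔
      (∀ I, Q I ↔ QV I) := by
  constructor
  · intro md I
    constructor
    · intro hQI
      by_contra hnQV
      have h2 := md I ∅ (fun h => absurd h hnQV) hQI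
      rw [hQ] at h2
      obtain ⟨a, h, hh⟩ := h2
      obtain ⟨f, hf⟩ := (hA a).1
      exact (hh f hf)
    · intro hQVI
      have hQu : Q Set.univ := by
        rw [hQ]
        exact ⟨Classical.arbitrary α, id, fun f _ => trivial⟩
      have hQVu : QV Set.univ := by
        rw [hQV]
        exact ⟨Classical.arbitrary β, id, fun f _ => trivial⟩
      exact md Set.univ I (fun _ => hQVI) hQu
  · intro he I₁ I₂ hv hq
    exact (he I₂).mpr (hv ((he I₁).mp hq))

end MonDet
end

section
/- Let Q_1 and Q_2 be Boolean queries preserved by homomorphisms, each equivalent to an infinite union of conjunctive queries (their approximations). Let e be a fresh nullary extensional predicate not occurring in Q_1 or Q_2, let Q be the query (Q_1 ∧ e) ∨ Q_2, and let V consist of identity views for all extensional relations occurring in Q_1 and Q_2 (but not for e). Then Q_1 is contained in Q_2 if and only if Q is monotonically determined over V. -/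
namespace MonDet

/-- Let `Q₁`, `Q₂` be Boolean queries preserved by homomorphisms,
with `Q₁` equivalent to the (possibly infinite) union of its CQ approximations
(canonical databases `A a`). Let `e` be a fresh nullary extensional predicate
(modelled by a propositional component `b` of the instance, not seen by `Q₁, Q₂`),
let `Q (I, b) := (Q₁ I ∧ b) ∨ Q₂ I`, and let `V` consist of identity views for all
extensional relations except `e` (so `V (I, b) = I`, and view-image inclusion is
`I₁ ⊆ I₂`). Then `Q₁` is contained in `Q₂` iff `Q` is monotonically determined
over `V`. -/
theorem containment_iff_monotonic_determinacy_with_nullary_e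
    {σ D : Type} (ar : σ → ℕ) {α : Type}
    (A : α → Set (RFact σ ar D))
    (Q₁ Q₂ : Set (RFact σ ar D) → Prop)
    (hQ₁ : ∀ I, Q₁ I ↔ ∃ a, ∃ h : D → D, IsHom ar h (A a) I)
    (hQ₂hom : ∀ (I I' : Set (RFact σ ar D)) (h : D → D),
      IsHom ar h I I' → Q₂ I → Q₂ I') :
    (∀ I, Q₁ I → Q₂ I) ↔
      (∀ (I₁ I₂ : Set (RFact σ ar D)) (b₁ b₂ : Prop), I₁ ⊆ I₂ →
        ((Q₁ I₁ ∧ b₁) ∨ Q₂ I₁) → ((Q₁ I₂ ∧ b₂) ∨ Q₂ I₂)) := by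
  constructor
  · intro hc I₁ I₂ b₁ b₂ hsub hQ
    have hQ₂I₁ : Q₂ I₁ := by
      rcases hQ with ⟨h1, _⟩ | h2
      · exact hc _ h1
      · exact h2
    right
    refine hQ₂hom I₁ I₂ id ?_ hQ₂I₁
    intro f hf
    have : (⟨f.1, id ∘ f.2⟩ : RFact σ ar D) = f := by
      cases f; rfl
    rw [this]
    exact hsub hf
  · intro hmd I hQ₁I
    have := hmd I I True False (subset_refl I) (Or.inl ⟨hQ₁I, trivial⟩)
    rcases this with ⟨_, hf⟩ | h2
    · exact hf.elim
    · exact h2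

end MonDet
end

section
/- Suppose the Duplicator has a winning strategy in the existential k-pebble game from I to I'. Then every Boolean Datalog query all of whose rule bodies have at most k variables that holds on I also holds on I'. Consequently, if for infinitely many k there are instances I_k, I'_k with Q(I_k) = True, Q(I'_k) = False, and I_k →_k I'_k, then the Boolean query Q is not definable in Datalog. -/
/-!
The facts derived on `I` that every position of the Duplicator's strategy carries to facts derived
on `I'` form a set closed under the rules: a position pebbling the head of a rule instance `η` can
be restricted to `range η` and then, since `η` has at most `k` variables, extended to pebble all of
`range η`, which maps `η` to a rule instance on `I'` with satisfied body. Hence the least fixpoint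
transfers. A finite program bounds the number of variables per rule, and `I_{k'}, I'_{k'}` for
large `k'` then separate `Q` from the program's query.
-/

namespace MonDet

/-- A Datalog rule over an extensional schema `(σe, are)` and an intensional
schema `(σi, ari)`: a head IDB atom and a body consisting of extensional and
intensional atoms over the rule's variables. -/
structure DRule {σe σi : Type} (are : σe → ℕ) (ari : σi → ℕ) where
  Var : Type
  headP : σi
  headVars : Fin (ari headP) → Var
  bodyE : Set (Σ R : σe, Fin (are R) → Var)
  bodyI : Set (Σ P : σi, Fin (ari P) → Var)

/-- A set `J` of IDB facts is closed under the rules of `Π` on the EDB instance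
`I`. -/
def Closed {σe σi D : Type} (are : σe → ℕ) (ari : σi → ℕ)
    (Prog : Set (DRule are ari)) (I : Set (RFact σe are D))
    (J : Set (RFact σi ari D)) : Prop :=
  ∀ ρ ∈ Prog, ∀ η : ρ.Var → D,
    (∀ a ∈ ρ.bodyE, (⟨a.1, η ∘ a.2⟩ : RFact σe are D) ∈ I) →
    (∀ a ∈ ρ.bodyI, (⟨a.1, η ∘ a.2⟩ : RFact σi ari D) ∈ J) →
    (⟨ρ.headP, η ∘ ρ.headVars⟩ : RFact σi ari D) ∈ J

/-- The least fixpoint of the Datalog program `Π` on the EDB instance `I`: the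
least set of IDB facts closed under the rules. -/
def FixPt {σe σi D : Type} (are : σe → ℕ) (ari : σi → ℕ)
    (Prog : Set (DRule are ari)) (I : Set (RFact σe are D)) :
    Set (RFact σi ari D) :=
  ⋂₀ {J | Closed are ari Prog I J}

/-- The Duplicator has a winning strategy in the existential `k`-pebble game. -/
def WinningStrategy {σ D D' : Type} (ar : σ → ℕ) (k : ℕ)
    (I : Set (RFact σ ar D)) (I' : Set (RFact σ ar D')) : Prop :=
  ∃ H : Set (D → Option D'), H.Nonempty ∧
    (∀ f ∈ H, PartialHom ar I I' f ∧ (pdom f).Finite ∧ (pdom f).ncard ≤ k) ∧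
    (∀ f ∈ H, ∀ g : D → Option D', (∀ a, g a = none ∨ g a = f a) → g ∈ H) ∧
    (∀ f ∈ H, (pdom f).ncard < k → ∀ a : D,
      ∃ g ∈ H, (∀ b ∈ pdom f, g b = f b) ∧ a ∈ pdom g)


section PartialMaps

variable {D D' : Type}

open Classical in
noncomputable def restrictDom (f : D → Option D') (S : Set D) : D → Option D' :=
  fun b => if b ∈ S then f b else none

lemma restrictDom_eq_none_or_eq (f : D → Option D') (S : Set D) (b : D) :
    restrictDom f S b = none ∨ restrictDom f S b = f b := by
  unfold restrictDom
  split_ifs <;> simp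

lemma restrictDom_of_mem {f : D → Option D'} {S : Set D} {b : D} (hb : b ∈ S) :
    restrictDom f S b = f b := by
  simp [restrictDom, hb]

lemma pdom_restrictDom (f : D → Option D') (S : Set D) :
    pdom (restrictDom f S) = pdom f ∩ S := by
  ext b
  by_cases hb : b ∈ S <;> simp [pdom, restrictDom, hb]

lemma exists_eq_some_comp {ι : Type} {g : D → Option D'} {η : ι → D}
    (hη : ∀ v, η v ∈ pdom g) : ∃ η' : ι → D', ∀ v, g (η v) = some (η' v) :=
  ⟨fun v => (g (η v)).get (Option.isSome_iff_ne_none.mpr (hη v)), fun v => by simp⟩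

lemma ncard_range_le_of_card_le {ι : Type} [Finite ι] {k : ℕ} (η : ι → D)
    (hk : Nat.card ι ≤ k) : (Set.range η).ncard ≤ k := by
  rw [← Nat.card_coe_set_eq]
  exact (Finite.card_range_le η).trans hk

end PartialMaps

lemma PartialHom.mem_of_eq_some {σ D D' : Type} {ar : σ → ℕ}
    {I : Set (RFact σ ar D)} {I' : Set (RFact σ ar D')} {f : D → Option D'}
    (hf : PartialHom ar I I' f) {R : σ} {t : Fin (ar R) → D} {t' : Fin (ar R) → D'}
    (hI : (⟨R, t⟩ : RFact σ ar D) ∈ I) (ht : ∀ i, f (t i) = some (t' i)) :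
    (⟨R, t'⟩ : RFact σ ar D') ∈ I' := by
  obtain ⟨t'', ht'', hI'⟩ := hf R t hI (fun i => by simp [pdom, ht i])
  have : t'' = t' := funext fun i => Option.some.inj ((ht'' i).symm.trans (ht i))
  rwa [this] at hI'

structure IsPebbleFamily {σ D D' : Type} (ar : σ → ℕ) (k : ℕ)
    (I : Set (RFact σ ar D)) (I' : Set (RFact σ ar D')) (H : Set (D → Option D')) : Prop where
  partialHom : ∀ f ∈ H, PartialHom ar I I' f
  mem_of_restrict : ∀ f ∈ H, ∀ g : D → Option D', (∀ a, g a = none ∨ g a = f a) → g ∈ H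
  forth : ∀ f ∈ H, (pdom f).ncard < k → ∀ a : D,
    ∃ g ∈ H, (∀ b ∈ pdom f, g b = f b) ∧ a ∈ pdom g

lemma WinningStrategy.exists_isPebbleFamily {σ D D' : Type} {ar : σ → ℕ} {k : ℕ}
    {I : Set (RFact σ ar D)} {I' : Set (RFact σ ar D')} (hws : WinningStrategy ar k I I') :
    ∃ H, H.Nonempty ∧ IsPebbleFamily ar k I I' H := by
  obtain ⟨H, hne, hmem, hres, hext⟩ := hws
  exact ⟨H, hne, ⟨fun f hf => (hmem f hf).1, hres, hext⟩⟩

namespace IsPebbleFamily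

variable {σ D D' : Type} {ar : σ → ℕ} {k : ℕ} {I : Set (RFact σ ar D)}
  {I' : Set (RFact σ ar D')} {H : Set (D → Option D')}

lemma restrictDom_mem (hH : IsPebbleFamily ar k I I' H) {f : D → Option D'} (hf : f ∈ H)
    (S : Set D) : restrictDom f S ∈ H :=
  hH.mem_of_restrict f hf _ (restrictDom_eq_none_or_eq f S)

lemma exists_extend_insert (hH : IsPebbleFamily ar k I I' H) {f : D → Option D'} (hf : f ∈ H)
    (hfin : (pdom f).Finite) {a : D} (hcard : (insert a (pdom f)).ncard ≤ k) :
    ∃ g ∈ H, (∀ b ∈ pdom f, g b = f b) ∧ pdom g = insert a (pdom f) := by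
  by_cases ha : a ∈ pdom f
  · exact ⟨f, hf, fun _ _ => rfl, (Set.insert_eq_of_mem ha).symm⟩
  have hlt : (pdom f).ncard < k := by
    rw [Set.ncard_insert_of_notMem ha hfin] at hcard
    omega
  obtain ⟨g, hg, hgf, hag⟩ := hH.forth f hf hlt a
  refine ⟨restrictDom g (insert a (pdom f)), hH.restrictDom_mem hg _,
    fun b hb => (restrictDom_of_mem (Set.mem_insert_of_mem a hb)).trans (hgf b hb), ?_⟩
  have hsub : insert a (pdom f) ⊆ pdom g :=
    Set.insert_subset hag fun b hb => by simpa [pdom, hgf b hb] using hb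
  rw [pdom_restrictDom, Set.inter_eq_right.mpr hsub]

lemma exists_extend_union (hH : IsPebbleFamily ar k I I' H) {f : D → Option D'} (hf : f ∈ H)
    (hfin : (pdom f).Finite) {S : Set D} (hS : S.Finite) (hcard : (pdom f ∪ S).ncard ≤ k) :
    ∃ g ∈ H, (∀ b ∈ pdom f, g b = f b) ∧ pdom g = pdom f ∪ S := by
  induction S, hS using Set.Finite.induction_on with
  | empty => exact ⟨f, hf, fun _ _ => rfl, (Set.union_empty _).symm⟩
  | @insert a S _ hS ih =>
    have hunion : pdom f ∪ insert a S = insert a (pdom f ∪ S) := Set.union_insert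
    have hcard' : (pdom f ∪ S).ncard ≤ k :=
      (Set.ncard_le_ncard (Set.union_subset_union_right _ (Set.subset_insert a S))
        (hfin.union (hS.insert a))).trans hcard
    obtain ⟨g, hg, hgf, hgdom⟩ := ih hcard'
    obtain ⟨g', hg', hg'g, hg'dom⟩ :=
      hH.exists_extend_insert hg (hgdom ▸ hfin.union hS) (by rwa [hgdom, ← hunion])
    refine ⟨g', hg', fun b hb => ?_, by rw [hg'dom, hgdom, hunion]⟩
    exact (hg'g b (hgdom ▸ Or.inl hb)).trans (hgf b hb)

lemma exists_pdom_eq (hH : IsPebbleFamily ar k I I' H) {f : D → Option D'} (hf : f ∈ H)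
    {S : Set D} (hS : S.Finite) (hcard : S.ncard ≤ k) :
    ∃ g ∈ H, (∀ b ∈ S, b ∈ pdom f → g b = f b) ∧ pdom g = S := by
  have hdom : pdom (restrictDom f S) ⊆ S := by
    rw [pdom_restrictDom]
    exact Set.inter_subset_right
  obtain ⟨g, hg, hgf, hgdom⟩ := hH.exists_extend_union (hH.restrictDom_mem hf S)
    (hS.subset hdom) hS (by rwa [Set.union_eq_right.mpr hdom])
  refine ⟨g, hg, fun b hbS hbf => ?_, by rw [hgdom, Set.union_eq_right.mpr hdom]⟩
  rw [hgf b (by rw [pdom_restrictDom]; exact ⟨hbf, hbS⟩), restrictDom_of_mem hbS]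

end IsPebbleFamily

section Datalog

variable {σe σi D : Type} {are : σe → ℕ} {ari : σi → ℕ} {Prog : Set (DRule are ari)}
  {I : Set (RFact σe are D)}

lemma closed_fixPt : Closed are ari Prog I (FixPt are ari Prog I) :=
  fun ρ hρ η hE hI _ hJ => hJ ρ hρ η hE fun a ha => hI a ha _ hJ

lemma fixPt_subset_of_closed {J : Set (RFact σi ari D)} (hJ : Closed are ari Prog I J) :
    FixPt are ari Prog I ⊆ J :=
  Set.sInter_subset_of_mem hJ

def pebbleTransferable (Prog : Set (DRule are ari)) (k : ℕ) (H : Set (D → Option D))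
    (I' : Set (RFact σe are D)) : Set (RFact σi ari D) :=
  {p | (Set.range p.2).ncard ≤ k ∧ ∀ f ∈ H, ∀ t' : Fin (ari p.1) → D,
    (∀ i, f (p.2 i) = some (t' i)) → (⟨p.1, t'⟩ : RFact σi ari D) ∈ FixPt are ari Prog I'}

lemma closed_pebbleTransferable {k : ℕ} {H : Set (D → Option D)} {I' : Set (RFact σe are D)}
    (hH : IsPebbleFamily are k I I' H)
    (hvars : ∀ ρ ∈ Prog, Finite ρ.Var ∧ Nat.card ρ.Var ≤ k) :
    Closed are ari Prog I (pebbleTransferable Prog k H I') := by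
  intro ρ hρ η hE hI
  have : Finite ρ.Var := (hvars ρ hρ).1
  have hcard := ncard_range_le_of_card_le η (hvars ρ hρ).2
  refine ⟨(Set.ncard_le_ncard (Set.range_comp_subset_range _ _) (Set.finite_range η)).trans
    hcard, fun f hf t' ht' => ?_⟩
  obtain ⟨g, hg, hgf, hgdom⟩ := hH.exists_pdom_eq hf (Set.finite_range η) hcard
  obtain ⟨η', hη'⟩ := exists_eq_some_comp (g := g) (η := η) fun v => hgdom ▸ ⟨v, rfl⟩
  have hhead : t' = η' ∘ ρ.headVars := funext fun i => by
    have hfi : f (η (ρ.headVars i)) = some (t' i) := ht' i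
    have hgi := hgf _ ⟨ρ.headVars i, rfl⟩ (by simp [pdom, hfi])
    exact Option.some.inj ((hgi.trans hfi).symm.trans (hη' _))
  rw [hhead]
  refine closed_fixPt ρ hρ η' (fun a ha => ?_) (fun a ha => ?_)
  · exact (hH.partialHom g hg).mem_of_eq_some (hE a ha) fun i => hη' (a.2 i)
  · exact (hI a ha).2 g hg _ fun i => hη' (a.2 i)

theorem exists_goal_mem_fixPt_of_winningStrategy {Goal : σi} {k : ℕ}
    {I' : Set (RFact σe are D)} (hvars : ∀ ρ ∈ Prog, Finite ρ.Var ∧ Nat.card ρ.Var ≤ k)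
    (hws : WinningStrategy are k I I')
    (hgoal : ∃ c, (⟨Goal, c⟩ : RFact σi ari D) ∈ FixPt are ari Prog I) :
    ∃ c, (⟨Goal, c⟩ : RFact σi ari D) ∈ FixPt are ari Prog I' := by
  obtain ⟨H, ⟨f, hf⟩, hH⟩ := hws.exists_isPebbleFamily
  obtain ⟨c, hc⟩ := hgoal
  obtain ⟨hcard, htransfer⟩ := fixPt_subset_of_closed (closed_pebbleTransferable hH hvars) hc
  obtain ⟨g, hg, -, hgdom⟩ := hH.exists_pdom_eq hf (Set.finite_range c) hcard
  obtain ⟨c', hc'⟩ := exists_eq_some_comp (g := g) (η := c) fun i => hgdom ▸ ⟨i, rfl⟩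
  exact ⟨c', htransfer g hg c' hc'⟩

end Datalog

/-- (1) If the Duplicator has a winning strategy in the existential
`k`-pebble game from `I` to `I'`, then every Boolean Datalog query all of whose
rule bodies have at most `k` variables that holds on `I` also holds on `I'`.
(2) Consequently, if for infinitely many `k` there are instances `I_k, I'_k` with
`Q(I_k) = True`, `Q(I'_k) = False` and `I_k →_k I'_k`, then the Boolean query `Q`
is not definable in Datalog (by a finite program with finitely many variables per
rule and nullary goal predicate). -/
theorem pebble_preservation_and_datalog_undefinability
    {σe D : Type} (are : σe → ℕ) :
    (∀ (σi : Type) (ari : σi → ℕ) (Prog : Set (DRule are ari)) (Goal : σi)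
        (k : ℕ) (I I' : Set (RFact σe are D)),
      (∀ ρ ∈ Prog, Finite ρ.Var ∧ Nat.card ρ.Var ≤ k) →
      WinningStrategy are k I I' →
      (∃ c, (⟨Goal, c⟩ : RFact σi ari D) ∈ FixPt are ari Prog I) →
      (∃ c, (⟨Goal, c⟩ : RFact σi ari D) ∈ FixPt are ari Prog I')) ∧
    (∀ Q : Set (RFact σe are D) → Prop,
      (∀ k : ℕ, ∃ k' ≥ k, ∃ I I' : Set (RFact σe are D),
        Q I ∧ ¬ Q I' ∧ WinningStrategy are k' I I') →
      ¬ ∃ (σi : Type) (ari : σi → ℕ) (Prog : Set (DRule are ari)) (Goal : σi),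
          Prog.Finite ∧ (∀ ρ ∈ Prog, Finite ρ.Var) ∧ ari Goal = 0 ∧
          ∀ I : Set (RFact σe are D),
            Q I ↔ ∃ c, (⟨Goal, c⟩ : RFact σi ari D) ∈ FixPt are ari Prog I) := by
  refine ⟨fun σi ari Prog Goal k I I' hvars hws hgoal =>
    exists_goal_mem_fixPt_of_winningStrategy hvars hws hgoal, ?_⟩
  rintro Q hinf ⟨σi, ari, Prog, Goal, hfin, hfinVar, -, hdef⟩
  obtain ⟨k, hk⟩ := (hfin.image fun ρ => Nat.card ρ.Var).bddAbove
  obtain ⟨k', hkk', I, I', hQ, hnQ, hws⟩ := hinf k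
  have hvars : ∀ ρ ∈ Prog, Finite ρ.Var ∧ Nat.card ρ.Var ≤ k' := fun ρ hρ =>
    ⟨hfinVar ρ hρ, (hk (Set.mem_image_of_mem _ hρ)).trans hkk'⟩
  exact hnQ ((hdef I').mpr (exists_goal_mem_fixPt_of_winningStrategy hvars hws ((hdef I).mp hQ)))

end MonDet
end
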